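/- For every n ≥ 1 and L = 2ⁿ⁺¹ − 1, the complexity of η satisfies ℂ(L) ≤ 2L + (L+1)/2 = 2ⁿ⁺² + 2ⁿ − 2. -/

import Mathlib

/-- The four-letter alphabet `A = {a, x, y, z}`. -/
inductive A : Type
  | a | x | y | z
  deriving DecidableEq, Repr

/-- The substitution `τ : a ↦ axa, x ↦ y, y ↦ z, z ↦ x`. -/
def tau : A → List A
  | A.a => [A.a, A.x, A.a]
  | A.x => [A.y]
  | A.y => [A.z]
  | A.z => [A.x]

/-- The substitution `τ` extended to finite words by concatenation. -/
def tauW (w : List A) : List A := w.flatMap tau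

/-- `pw n = τⁿ(a)`, a word of length `2^(n+1) - 1`. -/
def pw : ℕ → List A
  | 0 => [A.a]
  | n + 1 => tauW (pw n)

/-- The fixed point `η` of `τ`: the unique one-sided infinite word having every
`τⁿ(a)` as a prefix.  (Since `pw (n+1)` has length `2^(n+2) - 1 > n`, reading its
`n`-th letter is well defined and independent of the choice of a large enough iterate.) -/
def eta (n : ℕ) : A := (pw (n + 1)).getD n A.a

/-- `w` is a (finite) factor of `η`. -/
def IsFactorEta (w : List A) : Prop :=
  ∃ i : ℕ, w = (List.range w.length).map (fun k => eta (i + k))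

/-- The complexity function of `η`: the number of distinct factors of `η` of length `L`. -/
noncomputable def etaComplexity (L : ℕ) : ℕ :=
  {w : List A | w.length = L ∧ IsFactorEta w}.ncard

/-!
Since `τ(a) = axa` and `τ` permutes `x, y, z` cyclically, `η(2k) = a` and `η(2k+1) = σ(η(k))` with
`σ : a ↦ x ↦ y ↦ z ↦ x`; so `η(m)` only depends on the 2-adic valuation of `m + 1`. A window of
length `2^(n+1) - 1` starting at `i` is therefore determined by `i mod 2^(n+1)` and the letter
(in `{x, y, z}`) at its at most one position `m` with `2^(n+1) ∣ m + 1`. If that letter is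
`η(2^n - 1)`, all positions with `2^n ∣ m + 1` carry the same letter and the window only depends
on `i mod 2^n`. This leaves `2 (2^(n+1) - 1) + 2^n` possible windows.
-/

def A.next : A → A
  | A.a => A.x
  | A.x => A.y
  | A.y => A.z
  | A.z => A.x

lemma A.next_ne_a (c : A) : c.next ≠ A.a := by
  cases c <;> simp [A.next]

lemma tau_of_ne_a {c : A} (hc : c ≠ A.a) : tau c = [c.next] := by
  cases c <;> simp_all [tau, A.next]

lemma tauW_a_cons {c : A} (hc : c ≠ A.a) (t : List A) :
    tauW (A.a :: c :: t) = A.a :: A.x :: A.a :: c.next :: tauW t := by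
  simp only [tauW, List.flatMap_cons, tau_of_ne_a hc]
  rfl

inductive IsAlternating : List A → Prop
  | single : IsAlternating [A.a]
  | cons {c : A} {t : List A} (hc : c ≠ A.a) (ht : IsAlternating t) :
      IsAlternating (A.a :: c :: t)

lemma isAlternating_tauW {w : List A} (h : IsAlternating w) :
    IsAlternating (tauW w) := by
  induction h with
  | single => exact .cons (c := A.x) (by decide) .single
  | cons hc _ ih =>
    rw [tauW_a_cons hc]
    exact .cons (by decide) (.cons (A.next_ne_a _) ih)

namespace IsAlternating

variable {w : List A}

lemma length_tauW (h : IsAlternating w) : (tauW w).length = 2 * w.length + 1 := by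
  induction h with
  | single => rfl
  | cons hc _ ih =>
    rw [tauW_a_cons hc]
    simp only [List.length_cons] at ih ⊢
    omega

lemma getD_two_mul (h : IsAlternating w) (i : ℕ) : w.getD (2 * i) A.a = A.a := by
  induction h generalizing i with
  | single => cases i <;> rfl
  | cons _ _ ih => cases i with
    | zero => rfl
    | succ i => exact ih i

lemma getD_tauW_two_mul_add_one (h : IsAlternating w) {j : ℕ} (hj : j < w.length) :
    (tauW w).getD (2 * j + 1) A.a = (w.getD j A.a).next := by
  induction h generalizing j with
  | single =>
    obtain rfl : j = 0 := by simpa using hj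
    rfl
  | cons hc _ ih =>
    rw [tauW_a_cons hc]
    match j, hj with
    | 0, _ => rfl
    | 1, _ => rfl
    | j + 2, hj => exact ih (by simpa using hj)

end IsAlternating

lemma isAlternating_pw (n : ℕ) : IsAlternating (pw n) := by
  induction n with
  | zero => exact .single
  | succ n ih => exact isAlternating_tauW ih

lemma lt_length_pw (n : ℕ) : n < (pw n).length := by
  induction n with
  | zero => simp [pw]
  | succ n ih =>
    rw [pw, (isAlternating_pw n).length_tauW]
    omega

lemma pw_prefix_pw_succ (n : ℕ) : pw n <+: pw (n + 1) := by
  induction n with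
  | zero => exact ⟨[A.x, A.a], rfl⟩
  | succ n ih =>
    obtain ⟨t, ht⟩ := ih
    exact ⟨_root_.tauW t, by rw [pw, pw, ← ht, tauW, tauW, tauW, List.flatMap_append]⟩

lemma pw_prefix_of_le {m n : ℕ} (h : m ≤ n) : pw m <+: pw n := by
  induction n, h using Nat.le_induction with
  | base => exact List.prefix_refl _
  | succ n _ ih => exact ih.trans (pw_prefix_pw_succ n)

lemma eta_eq_getD_pw {m n : ℕ} (h : m < n) : eta m = (pw n).getD m A.a := by
  obtain ⟨t, ht⟩ := pw_prefix_of_le h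
  rw [eta, ← ht, List.getD_append _ _ _ _ (lt_length_pw (m + 1) |>.trans' (Nat.lt_succ_self m))]

lemma eta_two_mul (k : ℕ) : eta (2 * k) = A.a :=
  (isAlternating_pw _).getD_two_mul k

lemma eta_two_mul_add_one (k : ℕ) : eta (2 * k + 1) = (eta k).next := by
  have hk : k < (pw (2 * k + 1)).length := (lt_length_pw _).trans' (by omega)
  rw [eta, pw, (isAlternating_pw _).getD_tauW_two_mul_add_one hk, ← eta_eq_getD_pw (by omega)]

lemma eta_ne_a_of_odd {m : ℕ} (hm : Odd m) : eta m ≠ A.a := by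
  obtain ⟨k, rfl⟩ := hm
  rw [eta_two_mul_add_one]
  exact A.next_ne_a _

lemma eta_eq_of_modEq {t m m' : ℕ} (h : m ≡ m' [MOD 2 ^ t]) (hm : ¬ 2 ^ t ∣ m + 1) :
    eta m = eta m' := by
  induction t generalizing m m' with
  | zero => exact absurd (one_dvd _) hm
  | succ t ih =>
    have hpar : m % 2 = m' % 2 := h.of_dvd (dvd_pow_self 2 t.succ_ne_zero)
    obtain ⟨k, rfl | rfl⟩ := Nat.even_or_odd' m
    · obtain ⟨k', rfl⟩ : ∃ k', m' = 2 * k' := ⟨m' / 2, by omega⟩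
      rw [eta_two_mul, eta_two_mul]
    · obtain ⟨k', rfl⟩ : ∃ k', m' = 2 * k' + 1 := ⟨m' / 2, by omega⟩
      rw [eta_two_mul_add_one, eta_two_mul_add_one, ih]
      · rw [pow_succ'] at h
        exact Nat.ModEq.mul_left_cancel' two_ne_zero (h.add_right_cancel' 1)
      · rintro ⟨q, hq⟩
        exact hm ⟨q, by rw [pow_succ']; linarith⟩

def etaPatch (t : ℕ) (c : A) (m : ℕ) : A := if 2 ^ t ∣ m + 1 then c else eta m

lemma etaPatch_periodic (t : ℕ) (c : A) : Function.Periodic (etaPatch t c) (2 ^ t) := by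
  intro m
  have hdvd : 2 ^ t ∣ m + 2 ^ t + 1 ↔ 2 ^ t ∣ m + 1 := by
    rw [add_right_comm]; exact Nat.dvd_add_self_right
  unfold etaPatch
  by_cases h : 2 ^ t ∣ m + 1
  · rw [if_pos h, if_pos (hdvd.mpr h)]
  · rw [if_neg h, if_neg (hdvd.not.mpr h)]
    exact eta_eq_of_modEq Nat.add_modEq_right (hdvd.not.mpr h)

lemma etaPatch_succ (n : ℕ) :
    etaPatch (n + 1) (eta (2 ^ n - 1)) = etaPatch n (eta (2 ^ n - 1)) := by
  funext m
  unfold etaPatch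
  by_cases h1 : 2 ^ (n + 1) ∣ m + 1
  · rw [if_pos h1, if_pos ((pow_dvd_pow 2 n.le_succ).trans h1)]
  rw [if_neg h1]
  split_ifs with h2
  · obtain ⟨q, hq⟩ := h2
    obtain ⟨r, rfl⟩ : Odd q := Nat.not_even_iff_odd.mp fun ⟨r, hr⟩ =>
      h1 ⟨r, by rw [hq, hr, pow_succ]; ring⟩
    have hm : m = 2 ^ n - 1 + 2 ^ (n + 1) * r := by
      have : m + 1 = 2 ^ (n + 1) * r + 2 ^ n := by rw [hq, pow_succ]; ring
      have := Nat.two_pow_pos n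
      omega
    refine eta_eq_of_modEq ?_ h1
    rw [hm]
    exact Nat.add_modulus_mul_modEq_iff.mpr rfl
  · rfl

def window (f : ℕ → A) (i L : ℕ) : List A := (List.range L).map fun k => f (i + k)

lemma window_eq_of_modEq {f : ℕ → A} {p i j : ℕ} (hf : Function.Periodic f p)
    (h : i ≡ j [MOD p]) (L : ℕ) : window f i L = window f j L :=
  List.map_congr_left fun k _ => calc
    f (i + k) = f ((i + k) % p) := (hf.map_mod_nat _).symm
    _ = f ((j + k) % p) := congrArg f (h.add_right k)
    _ = f (j + k) := hf.map_mod_nat _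

lemma window_eta_eq_window_etaPatch {t i : ℕ} {c : A}
    (hc : ∀ k < 2 ^ t - 1, 2 ^ t ∣ i + k + 1 → eta (i + k) = c) :
    window eta i (2 ^ t - 1) = window (etaPatch t c) (i % 2 ^ t) (2 ^ t - 1) := by
  refine List.map_congr_left fun k hk => ?_
  rw [List.mem_range] at hk
  have hmod : i % 2 ^ t + k ≡ i + k [MOD 2 ^ t] := (Nat.mod_modEq i _).add_right k
  have hdvd : 2 ^ t ∣ i % 2 ^ t + k + 1 ↔ 2 ^ t ∣ i + k + 1 :=
    (hmod.add_right 1).dvd_iff dvd_rfl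
  unfold etaPatch
  split_ifs with h
  · exact hc k hk (hdvd.mp h)
  · exact eta_eq_of_modEq hmod.symm (hdvd.not.mp h)

instance : Fintype A := ⟨{A.a, A.x, A.y, A.z}, fun c => by cases c <;> simp⟩

def windowFamily (n : ℕ) : Finset (List A) :=
  ((Finset.Ioo 0 (2 ^ (n + 1)) ×ˢ ({A.a, eta (2 ^ n - 1)}ᶜ : Finset A)).image
      fun p => window (etaPatch (n + 1) p.2) p.1 (2 ^ (n + 1) - 1)) ∪
    (Finset.Ico (2 ^ n) (2 ^ (n + 1))).image
      fun j => window (etaPatch (n + 1) (eta (2 ^ n - 1))) j (2 ^ (n + 1) - 1)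

lemma eta_two_pow_sub_one_ne_a {n : ℕ} (hn : 1 ≤ n) : eta (2 ^ n - 1) ≠ A.a :=
  eta_ne_a_of_odd <| Nat.Even.sub_odd Nat.one_le_two_pow
    (Nat.even_pow.mpr ⟨even_two, by omega⟩) odd_one

lemma card_windowFamily_le {n : ℕ} (hn : 1 ≤ n) :
    (windowFamily n).card ≤ 2 ^ (n + 2) + 2 ^ n - 2 := by
  have hletters : ({A.a, eta (2 ^ n - 1)}ᶜ : Finset A).card = 2 := by
    rw [Finset.card_compl, Finset.card_pair (eta_two_pow_sub_one_ne_a hn).symm]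
    rfl
  calc (windowFamily n).card ≤ (2 ^ (n + 1) - 1) * 2 + (2 ^ (n + 1) - 2 ^ n) := by
        refine (Finset.card_union_le _ _).trans (add_le_add ?_ ?_)
        · refine Finset.card_image_le.trans ?_
          rw [Finset.card_product, Nat.card_Ioo, hletters, Nat.sub_zero]
        · exact Finset.card_image_le.trans (Nat.card_Ico _ _).le
    _ = 2 ^ (n + 2) + 2 ^ n - 2 := by
        have := Nat.two_pow_pos n
        rw [pow_succ, pow_succ, pow_succ]
        omega

lemma window_eta_mem_windowFamily {n : ℕ} (i : ℕ) :
    window eta i (2 ^ (n + 1) - 1) ∈ windowFamily n := by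
  by_cases h : ∀ k < 2 ^ (n + 1) - 1, 2 ^ (n + 1) ∣ i + k + 1 → eta (i + k) = eta (2 ^ n - 1)
  · refine Finset.mem_union_right _ (Finset.mem_image.mpr ⟨i % 2 ^ n + 2 ^ n, ?_, ?_⟩)
    · have := Nat.mod_lt i (Nat.two_pow_pos n)
      rw [Finset.mem_Ico, pow_succ]
      omega
    · rw [window_eta_eq_window_etaPatch h, etaPatch_succ]
      refine window_eq_of_modEq (etaPatch_periodic _ _) ?_ _
      rw [Nat.ModEq, Nat.mod_mod_of_dvd _ (pow_dvd_pow 2 n.le_succ), Nat.add_mod_right, Nat.mod_mod]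
  · push Not at h
    obtain ⟨k, hk, hdvd, hne⟩ := h
    have hslot : ∀ k' < 2 ^ (n + 1) - 1, 2 ^ (n + 1) ∣ i + k' + 1 → eta (i + k') = eta (i + k) := by
      intro k' hk' hdvd'
      have : i + k' + 1 ≡ i + k + 1 [MOD 2 ^ (n + 1)] :=
        (Nat.modEq_zero_iff_dvd.mpr hdvd').trans (Nat.modEq_zero_iff_dvd.mpr hdvd).symm
      rw [((this.add_right_cancel' 1).add_left_cancel' i).eq_of_lt_of_lt (by omega) (by omega)]
    rw [window_eta_eq_window_etaPatch hslot]
    refine Finset.mem_union_left _ (Finset.mem_image.mpr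
      ⟨(i % 2 ^ (n + 1), eta (i + k)), Finset.mem_product.mpr ⟨?_, ?_⟩, rfl⟩)
    · refine Finset.mem_Ioo.mpr ⟨Nat.pos_of_ne_zero fun hi => ?_, Nat.mod_lt _ (Nat.two_pow_pos _)⟩
      rw [add_assoc, Nat.dvd_add_right (Nat.dvd_of_mod_eq_zero hi)] at hdvd
      have := Nat.le_of_dvd k.succ_pos hdvd
      omega
    · have h2 : 2 ∣ i + k + 1 := (dvd_pow_self 2 n.succ_ne_zero).trans hdvd
      have hodd : Odd (i + k) := Nat.odd_iff.mpr (by omega)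
      simp only [Finset.mem_compl, Finset.mem_insert, Finset.mem_singleton, not_or]
      exact ⟨eta_ne_a_of_odd hodd, hne⟩

/-- **Upper bound on complexity**: for `L = |p⁽ⁿ⁾| = 2^(n+1) - 1` (with `n ≥ 1`),
`ℂ(L) ≤ 2L + (L+1)/2 = 2^(n+2) + 2^n - 2`. -/
theorem complexity_upper_bound (n : ℕ) (hn : 1 ≤ n) :
    etaComplexity (2 ^ (n + 1) - 1) ≤ 2 ^ (n + 2) + 2 ^ n - 2 := by
  have hsub : {w : List A | w.length = 2 ^ (n + 1) - 1 ∧ IsFactorEta w} ⊆ windowFamily n := by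
    rintro w ⟨hlen, i, hw⟩
    rw [hw, hlen]
    exact window_eta_mem_windowFamily i
  calc etaComplexity (2 ^ (n + 1) - 1)
      ≤ (windowFamily n : Set (List A)).ncard := Set.ncard_le_ncard hsub (Finset.finite_toSet _)
    _ = (windowFamily n).card := Set.ncard_coe_finset _
    _ ≤ 2 ^ (n + 2) + 2 ^ n - 2 := card_windowFamily_le hn
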